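/- arXiv:1304.3812 — 3 statements merged into one kernel-verified Lean document; each statement's English description precedes it below -/
import Mathlib

section
/- Let F be a finite field, let g : F^v → F be a v-variate polynomial with degree at most d_j in its j-th variable, and let H ∈ F satisfy H ≠ Σ_{b ∈ {0,1}^v} g(b). Suppose for each j ∈ {1, …, v} a prover strategy is given, i.e., a function ĝ_j assigning to each prefix (r_1, …, r_{j−1}) ∈ F^{j−1} a univariate polynomial ĝ_j[r_1,…,r_{j−1}] over F of degree at most d_j, with ĝ_1 a fixed univariate polynomial satisfying ĝ_1(0) + ĝ_1(1) = H. Then the probability, over (r_1, …, r_v) drawn uniformly at random from F^v, that simultaneously (i) ĝ_j[r_1,…,r_{j−1}](0) + ĝ_j[r_1,…,r_{j−1}](1) = ĝ_{j−1}[r_1,…,r_{j−2}](r_{j−1}) for every 2 ≤ j ≤ v, and (ii) ĝ_v[r_1,…,r_{v−1}](r_v) = g(r_1, …, r_v), is at most (Σ_{j=1}^{v} d_j)/|F|. -/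
/-!
The honest prover's round-`j` polynomial `s_j(X) = ∑_b g(r_0, …, r_{j-1}, X, b)` passes every
check of the verifier. A wrong claimed sum forces the prover's first polynomial `P_0` to differ
from `s_0`. If `P_j ≠ s_j` but `P_j(r_j) ≠ s_j(r_j)`, the round-`(j+1)` check forces
`P_{j+1} ≠ s_{j+1}`, and the final check against `g` forbids the discrepancy from surviving the
last round. So for every accepted `r` some round `j` has `P_j - s_j` a nonzero polynomial of
degree at most `d_j` vanishing at `r_j`. Since `P_j - s_j` depends only on `r_0, …, r_{j-1}`,
for each choice of the other coordinates at most `d_j` values of `r_j` do this; a union bound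
over the rounds finishes the proof.
-/

open MvPolynomial

/-- Coercion of a Boolean value to an element of a field (`true ↦ 1`, `false ↦ 0`). -/
def bF {F : Type*} [Field F] (b : Bool) : F := if b then 1 else 0

/-- Coercion of a Boolean vector to a vector of field elements. -/
def bvec {F : Type*} [Field F] {ι : Type*} (b : ι → Bool) : ι → F := fun i => bF (b i)

/-- The prefix `(r_0, …, r_{j-1})` of a vector `r ∈ F^v`. -/
def prefixOf {F : Type*} {v : ℕ} (r : Fin v → F) (j : Fin v) : Fin j.val → F :=
  fun i => r ⟨i.val, lt_trans i.2 j.2⟩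

open Finset Function Polynomial

theorem MvPolynomial.natDegree_aeval_le_sum_degreeOf {R σ : Type*} [CommSemiring R] [Fintype σ]
    (p : MvPolynomial σ R) (x : σ → R[X]) :
    (MvPolynomial.aeval x p).natDegree ≤ ∑ i, p.degreeOf i * (x i).natDegree := by
  classical
  conv_lhs => rw [p.as_sum, map_sum]
  refine natDegree_sum_le_of_forall_le _ _ fun m hm => ?_
  rw [aeval_monomial, Polynomial.algebraMap_eq, Finsupp.prod]
  calc (Polynomial.C (p.coeff m) * ∏ i ∈ m.support, x i ^ m i).natDegree
      ≤ ∑ i ∈ m.support, (x i ^ m i).natDegree :=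
        (natDegree_C_mul_le _ _).trans (natDegree_prod_le _ _)
    _ ≤ ∑ i ∈ m.support, p.degreeOf i * (x i).natDegree :=
        sum_le_sum fun i _ => natDegree_pow_le.trans
          (Nat.mul_le_mul_right _ (monomial_le_degreeOf i hm))
    _ ≤ ∑ i, p.degreeOf i * (x i).natDegree := sum_le_univ_sum_of_nonneg fun _ => Nat.zero_le _

theorem exists_ne_eval_eq_of_sumcheck_chain {R : Type*} [Semiring R] {v : ℕ} (hv : 0 < v)
    {p q : Fin v → R[X]} (x : Fin v → R) (h₀ : p ⟨0, hv⟩ ≠ q ⟨0, hv⟩)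
    (hp : ∀ j : Fin v, 0 < j.val →
      (p j).eval 0 + (p j).eval 1 = (p ⟨j.val - 1, (Nat.sub_le _ _).trans_lt j.2⟩).eval
        (x ⟨j.val - 1, (Nat.sub_le _ _).trans_lt j.2⟩))
    (hq : ∀ j : Fin v, 0 < j.val →
      (q j).eval 0 + (q j).eval 1 = (q ⟨j.val - 1, (Nat.sub_le _ _).trans_lt j.2⟩).eval
        (x ⟨j.val - 1, (Nat.sub_le _ _).trans_lt j.2⟩))
    (hlast : (p ⟨v - 1, Nat.sub_one_lt_of_lt hv⟩).eval (x ⟨v - 1, Nat.sub_one_lt_of_lt hv⟩)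
      = (q ⟨v - 1, Nat.sub_one_lt_of_lt hv⟩).eval (x ⟨v - 1, Nat.sub_one_lt_of_lt hv⟩)) :
    ∃ j, p j ≠ q j ∧ (p j).eval (x j) = (q j).eval (x j) := by
  by_contra! h
  have hne : ∀ (n : ℕ) (hn : n < v), p ⟨n, hn⟩ ≠ q ⟨n, hn⟩ := by
    intro n
    induction n with
    | zero => exact fun _ => h₀
    | succ n ih =>
      intro hn heq
      refine h ⟨n, by omega⟩ (ih (by omega)) ?_
      calc (p ⟨n, _⟩).eval (x ⟨n, _⟩)
          = (p ⟨n + 1, hn⟩).eval 0 + (p ⟨n + 1, hn⟩).eval 1 := (hp ⟨n + 1, hn⟩ n.succ_pos).symm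
        _ = (q ⟨n, _⟩).eval (x ⟨n, _⟩) := heq ▸ hq ⟨n + 1, hn⟩ n.succ_pos
  exact h _ (hne (v - 1) (by omega)) hlast

theorem card_filter_ne_zero_isRoot_mul_card_le {ι F : Type*} [Fintype ι] [DecidableEq ι]
    [CommRing F] [IsDomain F] [Fintype F] [DecidableEq F] (j : ι) (Q : (ι → F) → F[X]) {d : ℕ}
    (hQ : ∀ r r' : ι → F, (∀ i ≠ j, r i = r' i) → Q r = Q r')
    (hdeg : ∀ r, (Q r).natDegree ≤ d) :
    #{r | Q r ≠ 0 ∧ (Q r).IsRoot (r j)} * Fintype.card F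
      ≤ d * Fintype.card F ^ Fintype.card ι := by
  set s : Finset (ι → F) := {r | Q r ≠ 0 ∧ (Q r).IsRoot (r j)}
  let restrict : (ι → F) → ({i // i ≠ j} → F) := fun r i => r i
  have hfiber : ∀ y ∈ s.image restrict, #{r ∈ s | restrict r = y} ≤ d := by
    intro y hy
    obtain ⟨r₀, hr₀, rfl⟩ := mem_image.mp hy
    have hQr₀ : Q r₀ ≠ 0 := (mem_filter.mp hr₀).2.1
    have hQ_eq : ∀ r ∈ {r ∈ s | restrict r = restrict r₀}, Q r = Q r₀ := fun r hr =>
      hQ r r₀ fun i hi => congrFun (mem_filter.mp hr).2 ⟨i, hi⟩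
    calc #{r ∈ s | restrict r = restrict r₀}
        ≤ #(Q r₀).roots.toFinset := by
          refine card_le_card_of_injOn (fun r => r j) (fun r hr => ?_) fun r hr r' hr' hrr' => ?_
          · have hroot := (mem_filter.mp (mem_filter.mp hr).1).2.2
            rw [hQ_eq r hr] at hroot
            simpa [mem_roots hQr₀] using hroot
          · funext i
            by_cases hi : i = j
            · subst hi; exact hrr'
            · rw [mem_coe, mem_filter] at hr hr'
              exact (congrFun hr.2 ⟨i, hi⟩).trans (congrFun hr'.2 ⟨i, hi⟩).symm
      _ ≤ d := (Multiset.toFinset_card_le _).trans ((card_roots' _).trans (hdeg r₀))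
  calc #s * Fintype.card F
      ≤ d * #(s.image restrict) * Fintype.card F := by
        gcongr; exact card_le_mul_card_image s d hfiber
    _ ≤ d * Fintype.card ({i // i ≠ j} → F) * Fintype.card F := by
        gcongr; exact card_le_univ _
    _ = d * Fintype.card F ^ Fintype.card ι := by
        rw [mul_assoc, mul_comm (Fintype.card _), ← Fintype.card_prod,
          ← Fintype.card_congr (Equiv.funSplitAt j F), Fintype.card_fun]

section CubeSum

variable {F R : Type*} [CommSemiring F] [CommSemiring R] [Algebra F R] {v : ℕ}

noncomputable def cubeSum (g : MvPolynomial (Fin v) F) (k : ℕ) (x : Fin v → R) : R :=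
  if hk : k < v then
    cubeSum g (k + 1) (update x ⟨k, hk⟩ 0) + cubeSum g (k + 1) (update x ⟨k, hk⟩ 1)
  else MvPolynomial.aeval x g
termination_by v - k

variable (g : MvPolynomial (Fin v) F)

theorem cubeSum_of_lt {k : ℕ} (hk : k < v) (x : Fin v → R) :
    cubeSum g k x
      = cubeSum g (k + 1) (update x ⟨k, hk⟩ 0) + cubeSum g (k + 1) (update x ⟨k, hk⟩ 1) := by
  rw [cubeSum, dif_pos hk]

theorem cubeSum_of_le {k : ℕ} (hk : v ≤ k) (x : Fin v → R) :
    cubeSum g k x = MvPolynomial.aeval x g := by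
  rw [cubeSum, dif_neg (by omega)]

theorem cubeSum_congr {k : ℕ} {x y : Fin v → R} (h : ∀ i : Fin v, i.val < k → x i = y i) :
    cubeSum g k x = cubeSum g k y := by
  induction k, x using cubeSum.induct generalizing y with
  | case1 k x hk ih₀ ih₁ =>
    have hupd : ∀ (c : R) (i : Fin v), i.val < k + 1 →
        update x ⟨k, hk⟩ c i = update y ⟨k, hk⟩ c i := by
      intro c i hi
      by_cases hik : i = ⟨k, hk⟩
      · simp [hik]
      · rw [update_of_ne hik, update_of_ne hik]
        exact h i (lt_of_le_of_ne (Nat.lt_succ_iff.mp hi) fun h' => hik (Fin.ext h'))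
    rw [cubeSum_of_lt g hk, cubeSum_of_lt g hk, ih₀ (hupd 0), ih₁ (hupd 1)]
  | case2 k x hk =>
    rw [cubeSum_of_le g (by omega), cubeSum_of_le g (by omega), funext fun i => h i (by omega)]

theorem map_cubeSum {S : Type*} [CommSemiring S] [Algebra F S] (φ : R →ₐ[F] S) (k : ℕ)
    (x : Fin v → R) : φ (cubeSum g k x) = cubeSum g k (φ ∘ x) := by
  induction k, x using cubeSum.induct with
  | case1 k x hk ih₀ ih₁ =>
    rw [cubeSum_of_lt g hk, cubeSum_of_lt g hk, map_add, ih₀, ih₁, comp_update, comp_update,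
      map_zero, map_one]
  | case2 k x hk =>
    rw [cubeSum_of_le g (by omega), cubeSum_of_le g (by omega), ← AlgHom.comp_apply, comp_aeval]
    rfl

theorem natDegree_cubeSum_le {x : Fin v → F[X]} {j : Fin v} {k : ℕ} (hjk : j.val < k)
    (hxj : (x j).natDegree ≤ 1) (hx : ∀ i ≠ j, (x i).natDegree = 0) :
    (cubeSum g k x).natDegree ≤ g.degreeOf j := by
  induction k, x using cubeSum.induct with
  | case1 k x hk ih₀ ih₁ =>
    have hne : j ≠ ⟨k, hk⟩ := Fin.ne_of_val_ne (Nat.ne_of_lt hjk)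
    have hconst : ∀ c : F[X], c.natDegree = 0 → ∀ i ≠ j, (update x ⟨k, hk⟩ c i).natDegree = 0 :=
      fun c hc i hi => by by_cases hik : i = ⟨k, hk⟩ <;> simp [hik, hc, hx i hi]
    rw [cubeSum_of_lt g hk]
    refine (natDegree_add_le _ _).trans (max_le (ih₀ (by omega) ?_ (hconst 0 natDegree_zero))
      (ih₁ (by omega) ?_ (hconst 1 natDegree_one))) <;> rwa [update_of_ne hne]
  | case2 k x hk =>
    rw [cubeSum_of_le g (by omega)]
    refine (g.natDegree_aeval_le_sum_degreeOf x).trans ?_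
    rw [sum_eq_single j (fun i _ hi => by rw [hx i hi, mul_zero]) (by simp)]
    exact (Nat.mul_le_mul_left _ hxj).trans_eq (mul_one _)

theorem cubeSum_eq_sum_piFinset [Nontrivial F] [DecidableEq F] (k : ℕ) (x : Fin v → F) :
    cubeSum g k x = ∑ y ∈ Fintype.piFinset fun i => if i.val < k then {x i} else {0, 1},
      MvPolynomial.eval y g := by
  induction k, x using cubeSum.induct with
  | case1 k x hk ih₀ ih₁ =>
    set S := fun i : Fin v => if i.val < k then {x i} else ({0, 1} : Finset F)
    have hS : ∀ c : F,
        (fun i : Fin v => if i.val < k + 1 then {update x ⟨k, hk⟩ c i} else {0, 1})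
          = update S ⟨k, hk⟩ {c} := by
      intro c
      funext i
      by_cases hik : i = ⟨k, hk⟩
      · simp [hik]
      · have hik' : i.val < k + 1 ↔ i.val < k := by
          have : i.val ≠ k := fun h => hik (Fin.ext h)
          omega
        simp only [update_of_ne hik, S, hik']
    have hmem : ∀ c ∈ ({0, 1} : Finset F), c ∈ S ⟨k, hk⟩ := by simp [S]
    rw [cubeSum_of_lt g hk, ih₀, ih₁, hS, hS,
      Fintype.piFinset_update_singleton_eq_filter_piFinset_eq _ _ (hmem 0 (by simp)),
      Fintype.piFinset_update_singleton_eq_filter_piFinset_eq _ _ (hmem 1 (by simp)),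
      ← sum_pair zero_ne_one
        (f := fun c => ∑ y ∈ Fintype.piFinset S with y ⟨k, hk⟩ = c, MvPolynomial.eval y g),
      sum_fiberwise_of_maps_to]
    intro y hy
    simpa [S] using Fintype.mem_piFinset.mp hy ⟨k, hk⟩
  | case2 k x hk =>
    have hS : (fun i : Fin v => if i.val < k then {x i} else ({0, 1} : Finset F))
        = fun i => {x i} :=
      funext fun i => if_pos (by omega)
    rw [cubeSum_of_le g (by omega), hS, Fintype.piFinset_singleton, sum_singleton]
    rfl

end CubeSum

theorem prefixOf_congr {α : Type*} {v : ℕ} {r r' : Fin v → α} {j : Fin v}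
    (h : ∀ i < j, r i = r' i) : prefixOf r j = prefixOf r' j :=
  funext fun i => h _ i.2

section HonestProver

variable {F : Type*} [CommSemiring F] {v : ℕ} (g : MvPolynomial (Fin v) F)

/-- The honest prover's round-`j` message `X ↦ ∑_{b ∈ {0,1}^{v-j-1}} g(r_0, …, r_{j-1}, X, b)`. -/
noncomputable def honestRoundPoly (r : Fin v → F) (j : Fin v) : F[X] :=
  cubeSum g (j.val + 1) (update (fun i => C (r i)) j X)

theorem eval_honestRoundPoly (r : Fin v → F) (j : Fin v) (t : F) :
    (honestRoundPoly g r j).eval t = cubeSum g (j.val + 1) (update r j t) := by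
  rw [← Polynomial.coe_aeval_eq_eval, honestRoundPoly, map_cubeSum, comp_update]
  congr 1
  funext i
  by_cases hij : i = j <;> simp [hij]

theorem honestRoundPoly_congr {r r' : Fin v → F} {j : Fin v} (h : ∀ i < j, r i = r' i) :
    honestRoundPoly g r j = honestRoundPoly g r' j := by
  refine cubeSum_congr g fun i hi => ?_
  by_cases hij : i = j
  · simp [hij]
  · simp [update_of_ne hij, h i (lt_of_le_of_ne (Fin.le_iff_val_le_val.mpr (by omega)) hij)]

theorem natDegree_honestRoundPoly_le (r : Fin v → F) (j : Fin v) :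
    (honestRoundPoly g r j).natDegree ≤ g.degreeOf j :=
  natDegree_cubeSum_le g (Nat.lt_succ_self _) (by simpa using natDegree_X_le)
    fun i hi => by simp [hi]

theorem honestRoundPoly_eval_zero_add_eval_one (r : Fin v → F) (j : Fin v) (hj : 0 < j.val) :
    (honestRoundPoly g r j).eval 0 + (honestRoundPoly g r j).eval 1
      = (honestRoundPoly g r ⟨j.val - 1, (Nat.sub_le _ _).trans_lt j.2⟩).eval
          (r ⟨j.val - 1, (Nat.sub_le _ _).trans_lt j.2⟩) := by
  obtain ⟨_ | k, hk⟩ := j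
  · contradiction
  rw [eval_honestRoundPoly, eval_honestRoundPoly, eval_honestRoundPoly, update_eq_self,
    ← cubeSum_of_lt g hk]
  rfl

theorem honestRoundPoly_last_eval (hv : 0 < v) (r : Fin v → F) :
    (honestRoundPoly g r ⟨v - 1, Nat.sub_one_lt_of_lt hv⟩).eval
        (r ⟨v - 1, Nat.sub_one_lt_of_lt hv⟩) = MvPolynomial.eval r g := by
  rw [eval_honestRoundPoly, update_eq_self, cubeSum_of_le g (show v ≤ v - 1 + 1 by omega)]
  rfl

end HonestProver

section Field

variable {F : Type*} [Field F] {v : ℕ} (g : MvPolynomial (Fin v) F)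

theorem cubeSum_zero (x : Fin v → F) :
    cubeSum g 0 x = ∑ b : Fin v → Bool, MvPolynomial.eval (bvec b) g := by
  classical
  have hbF : ({0, 1} : Finset F) = univ.image bF := by
    ext c
    simp [bF, or_comm]
  have hinj : Injective (bvec : (Fin v → Bool) → Fin v → F) := by
    intro b b' h
    funext i
    have := congrFun h i
    cases hb : b i <;> cases hb' : b' i <;> simp_all [bvec, bF]
  rw [cubeSum_eq_sum_piFinset,
    ← sum_image (f := fun y => MvPolynomial.eval y g) fun b _ b' _ h => hinj h]
  simp only [Nat.not_lt_zero, if_false, hbF, Fintype.piFinset_image, Fintype.piFinset_univ]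
  rfl

theorem honestRoundPoly_first_eval_zero_add_eval_one (hv : 0 < v) (r : Fin v → F) :
    (honestRoundPoly g r ⟨0, hv⟩).eval 0 + (honestRoundPoly g r ⟨0, hv⟩).eval 1
      = ∑ b : Fin v → Bool, MvPolynomial.eval (bvec b) g := by
  rw [eval_honestRoundPoly, eval_honestRoundPoly, ← cubeSum_of_lt g hv, cubeSum_zero]

end Field

/-- Soundness of the sum-check protocol: if a prover strategy `P` (assigning to each
round `j` and each prefix of verifier randomness a univariate polynomial of degree
at most `d j`) starts from an incorrect claimed sum `H`, then the fraction of
random vectors `r ∈ F^v` passing all of the verifier's consistency checks (the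
round-by-round checks and the final evaluation check against `g`) is at most
`(Σ_j d j) / |F|`. -/
theorem sumcheck_soundness (F : Type*) [Field F] [Fintype F] [DecidableEq F]
    (v : ℕ) (hv : 0 < v)
    (g : MvPolynomial (Fin v) F) (d : Fin v → ℕ)
    (hdeg : ∀ j : Fin v, g.degreeOf j ≤ d j)
    (H : F) (hH : H ≠ ∑ b : Fin v → Bool, MvPolynomial.eval (bvec b) g)
    (P : (j : Fin v) → (Fin j.val → F) → Polynomial F)
    (hPdeg : ∀ (j : Fin v) (ρ : Fin j.val → F), (P j ρ).natDegree ≤ d j)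
    (hfirst : ∀ ρ : Fin (0 : ℕ) → F,
        (P ⟨0, hv⟩ ρ).eval 0 + (P ⟨0, hv⟩ ρ).eval 1 = H) :
    (Finset.univ.filter (fun r : Fin v → F =>
        (∀ j : Fin v, 0 < j.val →
            (P j (prefixOf r j)).eval 0 + (P j (prefixOf r j)).eval 1
              = (P ⟨j.val - 1, lt_of_le_of_lt (Nat.sub_le _ _) j.2⟩
                    (prefixOf r ⟨j.val - 1, lt_of_le_of_lt (Nat.sub_le _ _) j.2⟩)).eval
                  (r ⟨j.val - 1, lt_of_le_of_lt (Nat.sub_le _ _) j.2⟩)) ∧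
        (P ⟨v - 1, by omega⟩ (prefixOf r ⟨v - 1, by omega⟩)).eval (r ⟨v - 1, by omega⟩)
          = MvPolynomial.eval r g)).card * Fintype.card F
      ≤ (∑ j : Fin v, d j) * Fintype.card F ^ v := by
  set Q : Fin v → (Fin v → F) → F[X] := fun j r => P j (prefixOf r j) - honestRoundPoly g r j
  set bad : Fin v → Finset (Fin v → F) := fun j => {r | Q j r ≠ 0 ∧ (Q j r).IsRoot (r j)}
  have hbad : ∀ j, #(bad j) * Fintype.card F ≤ d j * Fintype.card F ^ v := fun j => by
    have hQ : ∀ r r' : Fin v → F, (∀ i ≠ j, r i = r' i) → Q j r = Q j r' := fun r r' h => by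
      have hlt : ∀ i < j, r i = r' i := fun i hi => h i hi.ne
      simp only [Q, prefixOf_congr hlt, honestRoundPoly_congr g hlt]
    have hQdeg : ∀ r, (Q j r).natDegree ≤ d j := fun r => (natDegree_sub_le _ _).trans
      (max_le (hPdeg j _) ((natDegree_honestRoundPoly_le g r j).trans (hdeg j)))
    exact (card_filter_ne_zero_isRoot_mul_card_le j (Q j) hQ hQdeg).trans_eq
      (by rw [Fintype.card_fin])
  refine (Nat.mul_le_mul_right _ (card_le_card (t := univ.biUnion bad) fun r hr => ?_)).trans ?_
  · obtain ⟨hchecks, hfinal⟩ := (mem_filter.mp hr).2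
    have hstart : P ⟨0, hv⟩ (prefixOf r ⟨0, hv⟩) ≠ honestRoundPoly g r ⟨0, hv⟩ := fun h =>
      hH (by rw [← hfirst, h, honestRoundPoly_first_eval_zero_add_eval_one])
    obtain ⟨j, hne, heq⟩ := exists_ne_eval_eq_of_sumcheck_chain hv r hstart hchecks
      (honestRoundPoly_eval_zero_add_eval_one g r)
      (hfinal.trans (honestRoundPoly_last_eval g hv r).symm)
    exact mem_biUnion.mpr ⟨j, mem_univ _, mem_filter.mpr ⟨mem_univ _, sub_ne_zero.mpr hne,
      by simp [Q, heq]⟩⟩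
  · calc #(univ.biUnion bad) * Fintype.card F
        ≤ (∑ j, #(bad j)) * Fintype.card F := Nat.mul_le_mul_right _ card_biUnion_le
      _ ≤ (∑ j : Fin v, d j) * Fintype.card F ^ v := by
        rw [sum_mul, sum_mul]
        exact sum_le_sum fun j _ => hbad j
end

section
/- Let F be a field, and let V_i : {0,1}^{s_i} → F, V_{i+1} : {0,1}^{s_{i+1}} → F, add_i, mult_i : {0,1}^{s_i + 2 s_{i+1}} → {0,1} be functions such that for all p ∈ {0,1}^{s_i}: V_i(p) = Σ_{(ω_1, ω_2) ∈ {0,1}^{s_{i+1}} × {0,1}^{s_{i+1}}} [ add_i(p, ω_1, ω_2)·(V_{i+1}(ω_1) + V_{i+1}(ω_2)) + mult_i(p, ω_1, ω_2)·V_{i+1}(ω_1)·V_{i+1}(ω_2) ]. Then for every z ∈ F^{s_i}: Ṽ_i(z) = Σ_{(p, ω_1, ω_2) ∈ {0,1}^{s_i + 2 s_{i+1}}} β_{s_i}(z, p)·( ãdd_i(p, ω_1, ω_2)·(Ṽ_{i+1}(ω_1) + Ṽ_{i+1}(ω_2)) + m̃ult_i(p, ω_1, ω_2)·Ṽ_{i+1}(ω_1)·Ṽ_{i+1}(ω_2)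 ), where ãdd_i, m̃ult_i, Ṽ_i, Ṽ_{i+1} denote multilinear extensions. -/
open MvPolynomial

/-- `β_s(z, p) = ∏_j ((1-z_j)(1-p_j) + z_j p_j)`, as a function of `z, p ∈ F^s`. -/
def betaFn {F : Type*} [Field F] {ι : Type*} [Fintype ι] (z p : ι → F) : F :=
  ∏ j, ((1 - z j) * (1 - p j) + z j * p j)

/-!
A polynomial of degree at most one in each variable is determined by its values on the
Boolean cube, and `β(z, ·)` is the Lagrange basis there: for such an exponent vector `d`,
`∑_p β(z, p) p^d` factors over the coordinates into one-variable sums `∑_{b ∈ {0,1}} β(t, b) b^k`,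
each equal to `t^k` for `k ≤ 1`. Summing over the monomials of `Ṽ_i` expresses `Ṽ_i(z)` through
`V_i` on the cube, and the wiring hypothesis and the agreement of the extensions with
`add_i`, `mult_i`, `V_{i+1}` on the cube do the rest.
-/

section Interpolation

variable {F : Type*} [Field F]

lemma sum_bool_beta_mul_bF_pow (t : F) {k : ℕ} (hk : k ≤ 1) :
    ∑ b : Bool, ((1 - t) * (1 - bF b) + t * bF b) * bF b ^ k = t ^ k := by
  interval_cases k <;> simp [bF]

lemma sum_betaFn_mul_prod_pow {σ : Type*} [Fintype σ] [DecidableEq σ] (z : σ → F)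
    (d : σ →₀ ℕ) (hd : ∀ i, d i ≤ 1) :
    ∑ p : σ → Bool, betaFn z (bvec p) * ∏ i, bvec p i ^ d i = ∏ i, z i ^ d i := by
  simp only [betaFn, bvec, ← Finset.prod_mul_distrib]
  rw [← Fintype.prod_sum fun i (b : Bool) =>
    ((1 - z i) * (1 - bF b) + z i * bF b) * (bF b : F) ^ d i]
  exact Fintype.prod_congr _ _ fun i => sum_bool_beta_mul_bF_pow (z i) (hd i)

lemma eval_eq_sum_betaFn_mul_eval {σ : Type*} [Fintype σ] [DecidableEq σ]
    (P : MvPolynomial σ F) (hP : ∀ i, P.degreeOf i ≤ 1) (z : σ → F) :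
    eval z P = ∑ p : σ → Bool, betaFn z (bvec p) * eval (bvec p) P := by
  simp only [eval_eq', Finset.mul_sum]
  rw [Finset.sum_comm]
  refine Finset.sum_congr rfl fun d hd => ?_
  have hd_le : ∀ i, d i ≤ 1 := fun i => (monomial_le_degreeOf i hd).trans (hP i)
  rw [← sum_betaFn_mul_prod_pow z d hd_le, Finset.mul_sum]
  exact Fintype.sum_congr _ _ fun p => mul_left_comm _ _ _

end Interpolation

theorem gkr_layer_identity_general (F : Type*) [Field F] (si si1 : ℕ)
    (Vi : (Fin si → Bool) → F) (Vi1 : (Fin si1 → Bool) → F)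
    (addg multg : (Fin si → Bool) → (Fin si1 → Bool) → (Fin si1 → Bool) → Bool)
    (hwire : ∀ p : Fin si → Bool,
        Vi p = ∑ w1 : Fin si1 → Bool, ∑ w2 : Fin si1 → Bool,
          (bF (addg p w1 w2) * (Vi1 w1 + Vi1 w2)
            + bF (multg p w1 w2) * (Vi1 w1 * Vi1 w2)))
    (Pi : MvPolynomial (Fin si) F)
    (hPiml : ∀ x, Pi.degreeOf x ≤ 1)
    (hPi : ∀ p : Fin si → Bool, MvPolynomial.eval (bvec p) Pi = Vi p)
    (Pi1 : MvPolynomial (Fin si1) F)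
    (hPi1 : ∀ p : Fin si1 → Bool, MvPolynomial.eval (bvec p) Pi1 = Vi1 p)
    (Padd : MvPolynomial (Fin si ⊕ (Fin si1 ⊕ Fin si1)) F)
    (hPadd : ∀ (p : Fin si → Bool) (w1 w2 : Fin si1 → Bool),
        MvPolynomial.eval (Sum.elim (bvec p) (Sum.elim (bvec w1) (bvec w2))) Padd
          = bF (addg p w1 w2))
    (Pmult : MvPolynomial (Fin si ⊕ (Fin si1 ⊕ Fin si1)) F)
    (hPmult : ∀ (p : Fin si → Bool) (w1 w2 : Fin si1 → Bool),
        MvPolynomial.eval (Sum.elim (bvec p) (Sum.elim (bvec w1) (bvec w2))) Pmult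
          = bF (multg p w1 w2))
    (z : Fin si → F) :
    MvPolynomial.eval z Pi
      = ∑ p : Fin si → Bool, ∑ w1 : Fin si1 → Bool, ∑ w2 : Fin si1 → Bool,
          betaFn z (bvec p) *
            (MvPolynomial.eval (Sum.elim (bvec p) (Sum.elim (bvec w1) (bvec w2))) Padd *
                (MvPolynomial.eval (bvec w1) Pi1 + MvPolynomial.eval (bvec w2) Pi1)
              + MvPolynomial.eval (Sum.elim (bvec p) (Sum.elim (bvec w1) (bvec w2))) Pmult *
                  (MvPolynomial.eval (bvec w1) Pi1 * MvPolynomial.eval (bvec w2) Pi1)) := by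
  rw [eval_eq_sum_betaFn_mul_eval Pi hPiml z]
  refine Fintype.sum_congr _ _ fun p => ?_
  simp_rw [hPi p, hwire p, Finset.mul_sum, hPadd, hPmult, hPi1]

/-- The GKR per-layer identity: if `V_i` is obtained from `V_{i+1}` via the wiring
predicates `add_i` and `mult_i` of a layered fan-in-2 arithmetic circuit, then for
every `z ∈ F^{s_i}`,
`Ṽ_i(z) = Σ_{(p,ω₁,ω₂) ∈ {0,1}^{s_i + 2 s_{i+1}}} β_{s_i}(z,p) ·
  (ãdd_i(p,ω₁,ω₂)·(Ṽ_{i+1}(ω₁)+Ṽ_{i+1}(ω₂)) + m̃ult_i(p,ω₁,ω₂)·Ṽ_{i+1}(ω₁)·Ṽ_{i+1}(ω₂))`,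
where tildes denote multilinear extensions. -/
theorem gkr_layer_identity (F : Type*) [Field F] (si si1 : ℕ)
    (Vi : (Fin si → Bool) → F) (Vi1 : (Fin si1 → Bool) → F)
    (addg multg : (Fin si → Bool) → (Fin si1 → Bool) → (Fin si1 → Bool) → Bool)
    (hwire : ∀ p : Fin si → Bool,
        Vi p = ∑ w1 : Fin si1 → Bool, ∑ w2 : Fin si1 → Bool,
          (bF (addg p w1 w2) * (Vi1 w1 + Vi1 w2)
            + bF (multg p w1 w2) * (Vi1 w1 * Vi1 w2)))
    (Pi : MvPolynomial (Fin si) F)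
    (hPiml : ∀ x, Pi.degreeOf x ≤ 1)
    (hPi : ∀ p : Fin si → Bool, MvPolynomial.eval (bvec p) Pi = Vi p)
    (Pi1 : MvPolynomial (Fin si1) F)
    (hPi1ml : ∀ x, Pi1.degreeOf x ≤ 1)
    (hPi1 : ∀ p : Fin si1 → Bool, MvPolynomial.eval (bvec p) Pi1 = Vi1 p)
    (Padd : MvPolynomial (Fin si ⊕ (Fin si1 ⊕ Fin si1)) F)
    (hPaddml : ∀ x, Padd.degreeOf x ≤ 1)
    (hPadd : ∀ (p : Fin si → Bool) (w1 w2 : Fin si1 → Bool),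
        MvPolynomial.eval (Sum.elim (bvec p) (Sum.elim (bvec w1) (bvec w2))) Padd
          = bF (addg p w1 w2))
    (Pmult : MvPolynomial (Fin si ⊕ (Fin si1 ⊕ Fin si1)) F)
    (hPmultml : ∀ x, Pmult.degreeOf x ≤ 1)
    (hPmult : ∀ (p : Fin si → Bool) (w1 w2 : Fin si1 → Bool),
        MvPolynomial.eval (Sum.elim (bvec p) (Sum.elim (bvec w1) (bvec w2))) Pmult
          = bF (multg p w1 w2))
    (z : Fin si → F) :
    MvPolynomial.eval z Pi
      = ∑ p : Fin si → Bool, ∑ w1 : Fin si1 → Bool, ∑ w2 : Fin si1 → Bool,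
          betaFn z (bvec p) *
            (MvPolynomial.eval (Sum.elim (bvec p) (Sum.elim (bvec w1) (bvec w2))) Padd *
                (MvPolynomial.eval (bvec w1) Pi1 + MvPolynomial.eval (bvec w2) Pi1)
              + MvPolynomial.eval (Sum.elim (bvec p) (Sum.elim (bvec w1) (bvec w2))) Pmult *
                  (MvPolynomial.eval (bvec w1) Pi1 * MvPolynomial.eval (bvec w2) Pi1)) :=
  gkr_layer_identity_general F si si1 Vi Vi1 addg multg hwire Pi hPiml hPi Pi1 hPi1 Padd hPadd Pmult
    hPmult z
end

section
/- Let F be a field, k ≥ 0, n = 2^k, and let A, B : {0,1}^k × {0,1}^k → F be functions (representing n × n matrices indexed by bit strings). Define D : {0,1}^k × {0,1}^k → F by D(i, j) = Σ_{l ∈ {0,1}^k} A(i, l)·B(l, j), i.e., D represents the matrix product A·B. Then for all (p_1, p_2) ∈ F^k × F^k: D̃(p_1, p_2) = Σ_{p_3 ∈ {0,1}^k} Ã(p_1, p_3)·B̃(p_3, p_2), where Ã, B̃, D̃ denote multilinear extensions. -/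
/-!
A multilinear polynomial is recovered from its values on the Boolean cube by Lagrange
interpolation, `P(p) = ∑_b χ_b(p) P(b)` with `χ_b(p) = cubeLagrange p b`, because each
monomial has exponents at most one and `x = (1 - x)·0 + x·1`, `1 = (1 - x) + x`. With the
variables split into two blocks this reads `P̃(p, q) = χ(p) ⬝ᵥ M *ᵥ χ(q)` for the table `M` of
values of `P`, and at a Boolean point `b` the vector `χ(b)` is the basis vector `e_b`. Hence
`D̃(p₁, p₂) = χ(p₁) ⬝ᵥ (A * B) *ᵥ χ(p₂) = (χ(p₁) ᵥ* A) ⬝ᵥ (B *ᵥ χ(p₂))`, and the `l`-th entries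
of `χ(p₁) ᵥ* A` and `B *ᵥ χ(p₂)` are `Ã(p₁, l)` and `B̃(l, p₂)`.
-/

open MvPolynomial

def cubeLagrange {R ι : Type*} [CommRing R] [Fintype ι] (p : ι → R) (b : ι → Bool) : R :=
  ∏ i, if b i then p i else 1 - p i

lemma Fintype.sum_sumArrow {ι κ α M : Type*} [Fintype ι] [Fintype κ] [Fintype α]
    [DecidableEq ι] [DecidableEq κ] [AddCommMonoid M] (f : (ι ⊕ κ → α) → M) :
    ∑ b, f b = ∑ i : ι → α, ∑ j : κ → α, f (Sum.elim i j) := by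
  rw [← (Equiv.sumArrowEquivProdArrow ι κ α).symm.sum_comp, Fintype.sum_prod_type]
  rfl

lemma cubeLagrange_sumElim {R ι κ : Type*} [CommRing R] [Fintype ι] [Fintype κ] (p : ι → R)
    (q : κ → R) (i : ι → Bool) (j : κ → Bool) :
    cubeLagrange (Sum.elim p q) (Sum.elim i j) = cubeLagrange p i * cubeLagrange q j :=
  Fintype.prod_sum_type _

lemma bvec_sumElim {F ι κ : Type*} [Field F] (i : ι → Bool) (j : κ → Bool) :
    (bvec (Sum.elim i j) : ι ⊕ κ → F) = Sum.elim (bvec i) (bvec j) :=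
  funext fun x => by cases x <;> rfl

open Matrix

section Interpolation

variable {F ι κ : Type*} [Field F] [Fintype ι] [Fintype κ]

lemma pow_eq_sum_bool {t : ℕ} (ht : t ≤ 1) (x : F) :
    x ^ t = ∑ c : Bool, (if c then x else 1 - x) * bF c ^ t := by
  interval_cases t <;> simp [bF]

lemma prod_pow_eq_sum_cubeLagrange [DecidableEq ι] (m : ι →₀ ℕ) (hm : ∀ i, m i ≤ 1)
    (p : ι → F) :
    ∏ i, p i ^ m i = ∑ b : ι → Bool, cubeLagrange p b * ∏ i, bvec b i ^ m i := by
  simp only [cubeLagrange, bvec, ← Finset.prod_mul_distrib]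
  rw [← Fintype.prod_sum fun i (c : Bool) => (if c then p i else 1 - p i) * bF c ^ m i]
  exact Finset.prod_congr rfl fun i _ => pow_eq_sum_bool (hm i) (p i)

lemma eval_eq_sum_cubeLagrange [DecidableEq ι] (P : MvPolynomial ι F)
    (hP : ∀ i, P.degreeOf i ≤ 1) (p : ι → F) :
    eval p P = ∑ b : ι → Bool, cubeLagrange p b * eval (bvec b) P := by
  simp only [eval_eq', Finset.mul_sum]
  rw [Finset.sum_comm]
  refine Finset.sum_congr rfl fun m hm => ?_
  rw [prod_pow_eq_sum_cubeLagrange m (fun i => (monomial_le_degreeOf i hm).trans (hP i)),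
    Finset.mul_sum]
  exact Finset.sum_congr rfl fun b _ => by ring

lemma cubeLagrange_bvec [DecidableEq ι] (c : ι → Bool) :
    cubeLagrange (bvec c : ι → F) = Pi.single c 1 := by
  ext b
  have factor : ∀ i, (if b i then bvec c i else 1 - bvec c i : F) = if b i = c i then 1 else 0 :=
    fun i => by simp only [bvec, bF]; cases b i <;> cases c i <;> simp
  simp only [cubeLagrange, factor, Finset.prod_boole, Finset.mem_univ, true_implies,
    Pi.single_apply]
  exact if_congr _root_.funext_iff.symm rfl rfl

lemma eval_sumElim_eq_dotProduct_mulVec [DecidableEq ι] [DecidableEq κ]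
    (P : MvPolynomial (ι ⊕ κ) F) (hP : ∀ i, P.degreeOf i ≤ 1) (M : Matrix (ι → Bool) (κ → Bool) F)
    (hM : ∀ i j, eval (Sum.elim (bvec i) (bvec j)) P = M i j) (p : ι → F) (q : κ → F) :
    eval (Sum.elim p q) P = cubeLagrange p ⬝ᵥ M *ᵥ cubeLagrange q := by
  rw [eval_eq_sum_cubeLagrange P hP, Fintype.sum_sumArrow]
  simp only [cubeLagrange_sumElim, bvec_sumElim, hM, dotProduct, mulVec,
    Finset.mul_sum]
  exact Finset.sum_congr rfl fun i _ => Finset.sum_congr rfl fun j _ => by ring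

lemma eval_sumElim_bvec_right [DecidableEq ι] [DecidableEq κ] (P : MvPolynomial (ι ⊕ κ) F)
    (hP : ∀ i, P.degreeOf i ≤ 1) (M : Matrix (ι → Bool) (κ → Bool) F)
    (hM : ∀ i j, eval (Sum.elim (bvec i) (bvec j)) P = M i j) (p : ι → F) (c : κ → Bool) :
    eval (Sum.elim p (bvec c)) P = (cubeLagrange p ᵥ* M) c := by
  rw [eval_sumElim_eq_dotProduct_mulVec P hP M hM, cubeLagrange_bvec, mulVec_single_one]
  rfl

lemma eval_sumElim_bvec_left [DecidableEq ι] [DecidableEq κ] (P : MvPolynomial (ι ⊕ κ) F)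
    (hP : ∀ i, P.degreeOf i ≤ 1) (M : Matrix (ι → Bool) (κ → Bool) F)
    (hM : ∀ i j, eval (Sum.elim (bvec i) (bvec j)) P = M i j) (c : ι → Bool) (q : κ → F) :
    eval (Sum.elim (bvec c) q) P = (M *ᵥ cubeLagrange q) c := by
  rw [eval_sumElim_eq_dotProduct_mulVec P hP M hM, cubeLagrange_bvec, single_one_dotProduct]

end Interpolation

/-- The matrix-multiplication identity for multilinear extensions: if
`D(i,j) = Σ_l A(i,l)·B(l,j)` (matrices indexed by bit strings of length `k`,
so `n = 2^k`), then for all `p₁, p₂ ∈ F^k`,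
`D̃(p₁,p₂) = Σ_{p₃ ∈ {0,1}^k} Ã(p₁,p₃)·B̃(p₃,p₂)`. -/
theorem matmult_mle_identity (F : Type*) [Field F] (k : ℕ)
    (A B D : (Fin k → Bool) → (Fin k → Bool) → F)
    (hD : ∀ i j : Fin k → Bool, D i j = ∑ l : Fin k → Bool, A i l * B l j)
    (PA : MvPolynomial (Fin k ⊕ Fin k) F)
    (hPAml : ∀ x, PA.degreeOf x ≤ 1)
    (hPA : ∀ i j : Fin k → Bool,
        MvPolynomial.eval (Sum.elim (bvec i) (bvec j)) PA = A i j)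
    (PB : MvPolynomial (Fin k ⊕ Fin k) F)
    (hPBml : ∀ x, PB.degreeOf x ≤ 1)
    (hPB : ∀ i j : Fin k → Bool,
        MvPolynomial.eval (Sum.elim (bvec i) (bvec j)) PB = B i j)
    (PD : MvPolynomial (Fin k ⊕ Fin k) F)
    (hPDml : ∀ x, PD.degreeOf x ≤ 1)
    (hPD : ∀ i j : Fin k → Bool,
        MvPolynomial.eval (Sum.elim (bvec i) (bvec j)) PD = D i j)
    (p1 p2 : Fin k → F) :
    MvPolynomial.eval (Sum.elim p1 p2) PD
      = ∑ p3 : Fin k → Bool,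
          MvPolynomial.eval (Sum.elim p1 (bvec p3)) PA *
            MvPolynomial.eval (Sum.elim (bvec p3) p2) PB := by
  have hAB : D = of A * of B := Matrix.ext fun i j => by rw [hD, mul_apply]; rfl
  simp only [eval_sumElim_bvec_right PA hPAml A hPA, eval_sumElim_bvec_left PB hPBml B hPB]
  rw [eval_sumElim_eq_dotProduct_mulVec PD hPDml D hPD, hAB, ← mulVec_mulVec,
    dotProduct_mulVec]
  rfl
end
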